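/- Let A = (a_{ij}) be symmetric positive definite, b, x ∈ R^n, r = b − Ax, J = {i_1,…,i_m} an index set, E the corresponding matrix of standard basis columns, y = (EᵀAE)^{-1}Eᵀr, x_new = x + Ey, d = A^{-1}b − x, d_new = A^{-1}b − x_new. Then ‖d‖_A² − ‖d_new‖_A² ≥ (Σ_{k∈J} r_k²) / (Σ_{k∈J} a_{kk}). -/

import Mathlib

/-!
With `B = EᵀAE`, the step `y` solves the Galerkin system `B y = Eᵀ A d`, so the energy of
the error drops by exactly `yᵀBy`. Writing `s = By` (the restricted residual), Cauchy–Schwarz for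
the form `B` gives `(sᵀs)² = (yᵀBs)² ≤ (yᵀBy)(sᵀBs)`, and `sᵀBs ≤ tr(B) sᵀs` because
`|B_ij| ≤ √(B_ii B_jj)`. Hence `yᵀBy ≥ sᵀs / tr B`, and `tr B = Σ_{k∈J} a_kk`.
-/

namespace Matrix

variable {ι κ : Type*}

theorem PosSemidef.isSymm {B : Matrix ι ι ℝ} (hB : B.PosSemidef) : B.IsSymm :=
  isHermitian_iff_isSymm.mp hB.isHermitian

variable [Fintype ι]

theorem IsSymm.dotProduct_mulVec_comm {A : Matrix ι ι ℝ} (hA : A.IsSymm) (u v : ι → ℝ) :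
    u ⬝ᵥ A *ᵥ v = v ⬝ᵥ A *ᵥ u := by
  rw [dotProduct_mulVec, ← mulVec_transpose, hA.eq, dotProduct_comm]

theorem PosSemidef.dotProduct_mulVec_self_nonneg {B : Matrix ι ι ℝ} (hB : B.PosSemidef)
    (u : ι → ℝ) : 0 ≤ u ⬝ᵥ B *ᵥ u := by
  simpa using hB.dotProduct_mulVec_nonneg u

theorem PosSemidef.dotProduct_mulVec_sq_le {B : Matrix ι ι ℝ} (hB : B.PosSemidef)
    (u v : ι → ℝ) : (u ⬝ᵥ B *ᵥ v) ^ 2 ≤ (u ⬝ᵥ B *ᵥ u) * (v ⬝ᵥ B *ᵥ v) := by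
  have hquad : ∀ t : ℝ,
      0 ≤ (v ⬝ᵥ B *ᵥ v) * (t * t) + 2 * (u ⬝ᵥ B *ᵥ v) * t + u ⬝ᵥ B *ᵥ u := by
    intro t
    have := hB.dotProduct_mulVec_self_nonneg (u + t • v)
    rw [mulVec_add, mulVec_smul, add_dotProduct, dotProduct_add, dotProduct_add, smul_dotProduct,
      smul_dotProduct, dotProduct_smul, dotProduct_smul, hB.isSymm.dotProduct_mulVec_comm v u]
      at this
    simp only [smul_eq_mul] at this
    linarith
  have := discrim_le_zero hquad
  rw [discrim] at this
  linarith

theorem PosSemidef.apply_sq_le {B : Matrix ι ι ℝ} (hB : B.PosSemidef) (i j : ι) :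
    B i j ^ 2 ≤ B i i * B j j := by
  classical
  simpa using hB.dotProduct_mulVec_sq_le (Pi.single i 1) (Pi.single j 1)

theorem PosSemidef.dotProduct_mulVec_le_trace_mul {B : Matrix ι ι ℝ} (hB : B.PosSemidef)
    (x : ι → ℝ) : x ⬝ᵥ B *ᵥ x ≤ B.trace * (x ⬝ᵥ x) := by
  have hentry : ∀ i j, x i * (B i j * x j) ≤ (|x i| * √(B i i)) * (|x j| * √(B j j)) := by
    intro i j
    have hB_ij : |B i j| ≤ √(B i i) * √(B j j) := by
      rw [← Real.sqrt_mul hB.diag_nonneg]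
      exact Real.abs_le_sqrt (hB.apply_sq_le i j)
    calc x i * (B i j * x j) ≤ |x i| * |x j| * |B i j| :=
          (le_abs_self _).trans_eq (by simp only [abs_mul]; ring)
      _ ≤ |x i| * |x j| * (√(B i i) * √(B j j)) := by gcongr
      _ = _ := by ring
  calc x ⬝ᵥ B *ᵥ x = ∑ i, ∑ j, x i * (B i j * x j) := by
        simp only [dotProduct, mulVec, Finset.mul_sum]
    _ ≤ ∑ i, ∑ j, (|x i| * √(B i i)) * (|x j| * √(B j j)) :=
        Finset.sum_le_sum fun i _ ↦ Finset.sum_le_sum fun j _ ↦ hentry i j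
    _ = (∑ i, |x i| * √(B i i)) ^ 2 := by rw [sq, Finset.sum_mul_sum]
    _ ≤ (∑ i, |x i| ^ 2) * ∑ i, √(B i i) ^ 2 := Finset.sum_mul_sq_le_sq_mul_sq _ _ _
    _ = B.trace * (x ⬝ᵥ x) := by
        simp only [sq_abs, Real.sq_sqrt hB.diag_nonneg, trace, diag, dotProduct, ← sq]
        ring

theorem PosSemidef.mulVec_dotProduct_mulVec_div_trace_le {B : Matrix ι ι ℝ} (hB : B.PosSemidef)
    (y : ι → ℝ) : (B *ᵥ y ⬝ᵥ B *ᵥ y) / B.trace ≤ y ⬝ᵥ B *ᵥ y := by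
  set s := B *ᵥ y
  have hyBy := hB.dotProduct_mulVec_self_nonneg y
  have hss : 0 ≤ s ⬝ᵥ s := by simpa using dotProduct_star_self_nonneg s
  rcases hB.trace_nonneg.eq_or_lt with htr | htr
  · simpa [← htr] using hyBy
  rw [div_le_iff₀ htr]
  have hcs : (s ⬝ᵥ s) ^ 2 ≤ (y ⬝ᵥ B *ᵥ y) * (B.trace * (s ⬝ᵥ s)) := calc
    (s ⬝ᵥ s) ^ 2 = (y ⬝ᵥ B *ᵥ s) ^ 2 := by
      rw [hB.isSymm.dotProduct_mulVec_comm, dotProduct_comm]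
    _ ≤ (y ⬝ᵥ B *ᵥ y) * (s ⬝ᵥ B *ᵥ s) := hB.dotProduct_mulVec_sq_le y s
    _ ≤ (y ⬝ᵥ B *ᵥ y) * (B.trace * (s ⬝ᵥ s)) := by
        gcongr; exact hB.dotProduct_mulVec_le_trace_mul s
  rcases hss.eq_or_lt with hs0 | hs0
  · rw [← hs0]; positivity
  · nlinarith

theorem IsSymm.dotProduct_mulVec_sub_of_galerkin [Fintype κ] {A : Matrix ι ι ℝ}
    (hA : A.IsSymm) (E : Matrix ι κ ℝ) {d : ι → ℝ} {y : κ → ℝ}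
    (hy : (Eᵀ * A * E) *ᵥ y = Eᵀ *ᵥ (A *ᵥ d)) :
    d ⬝ᵥ A *ᵥ d - (d - E *ᵥ y) ⬝ᵥ A *ᵥ (d - E *ᵥ y) = y ⬝ᵥ (Eᵀ * A * E) *ᵥ y := by
  have hadj (v : ι → ℝ) : y ⬝ᵥ Eᵀ *ᵥ v = E *ᵥ y ⬝ᵥ v := by
    rw [dotProduct_mulVec, vecMul_transpose]
  have hEE : y ⬝ᵥ (Eᵀ * A * E) *ᵥ y = E *ᵥ y ⬝ᵥ A *ᵥ (E *ᵥ y) := by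
    rw [← mulVec_mulVec, ← mulVec_mulVec, hadj]
  have hEd : y ⬝ᵥ (Eᵀ * A * E) *ᵥ y = E *ᵥ y ⬝ᵥ A *ᵥ d := by rw [hy, hadj]
  rw [mulVec_sub, sub_dotProduct, dotProduct_sub, dotProduct_sub,
    hA.dotProduct_mulVec_comm d (E *ᵥ y)]
  linarith

variable {R : Type*} [CommSemiring R] [DecidableEq ι]

theorem transpose_one_submatrix_mulVec (f : κ → ι) (v : ι → R) :
    ((1 : Matrix ι ι R).submatrix id f)ᵀ *ᵥ v = v ∘ f := by
  ext j; simp [mulVec, dotProduct, one_apply]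

theorem transpose_one_submatrix_mul_mul_one_submatrix (A : Matrix ι ι R) (f : κ → ι) :
    ((1 : Matrix ι ι R).submatrix id f)ᵀ * A * (1 : Matrix ι ι R).submatrix id f =
      A.submatrix f f := by
  ext i j; simp [mul_apply, one_apply]

end Matrix

open Matrix

theorem stmt7_general {n m : ℕ} (A : Matrix (Fin n) (Fin n) ℝ) (hA : A.PosDef)
    (f : Fin m → Fin n) (hf : Function.Injective f)
    (E : Matrix (Fin n) (Fin m) ℝ)
    (hE : E = Matrix.of fun i j => if i = f j then (1 : ℝ) else 0)
    (b x r : Fin n → ℝ) (hr : r = b - A *ᵥ x)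
    (y : Fin m → ℝ) (hy : y = (Eᵀ * A * E)⁻¹ *ᵥ (Eᵀ *ᵥ r))
    (xnew : Fin n → ℝ) (hxnew : xnew = x + E *ᵥ y)
    (d dnew : Fin n → ℝ) (hd : d = A⁻¹ *ᵥ b - x) (hdnew : dnew = A⁻¹ *ᵥ b - xnew) :
    d ⬝ᵥ A *ᵥ d - dnew ⬝ᵥ A *ᵥ dnew ≥
      (∑ j : Fin m, (r (f j)) ^ 2) / (∑ j : Fin m, A (f j) (f j)) := by
  have hEsel : E = (1 : Matrix (Fin n) (Fin n) ℝ).submatrix id f := by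
    ext i j; simp [hE, one_apply]
  have hB : Eᵀ * A * E = A.submatrix f f := by
    rw [hEsel, transpose_one_submatrix_mul_mul_one_submatrix]
  have hBpd : (A.submatrix f f).PosDef := hA.submatrix hf
  have hAd : A *ᵥ d = r := by
    rw [hd, mulVec_sub, mulVec_mulVec, mul_nonsing_inv _ ((isUnit_iff_isUnit_det A).mp hA.isUnit),
      one_mulVec, hr]
  have hBy : (Eᵀ * A * E) *ᵥ y = Eᵀ *ᵥ (A *ᵥ d) := by
    rw [hy, hAd, mulVec_mulVec, hB,
      mul_nonsing_inv _ ((isUnit_iff_isUnit_det _).mp hBpd.isUnit), one_mulVec]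
  have hdnew : dnew = d - E *ᵥ y := by
    rw [hdnew, hxnew, hd]; abel
  rw [hdnew, hA.posSemidef.isSymm.dotProduct_mulVec_sub_of_galerkin E hBy, hB, ge_iff_le]
  convert hBpd.posSemidef.mulVec_dotProduct_mulVec_div_trace_le y using 2
  · rw [← hB, hBy, hAd, hEsel, transpose_one_submatrix_mulVec]
    simp [dotProduct, sq]
  · simp [trace]

/-- Projection step error reduction bound:
`‖d‖_A² - ‖d_new‖_A² ≥ (Σ_{k∈J} r_k²) / (Σ_{k∈J} a_{kk})`. -/
theorem stmt7 {n m : ℕ} (hm : 0 < m) (A : Matrix (Fin n) (Fin n) ℝ) (hA : A.PosDef)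
    (f : Fin m → Fin n) (hf : Function.Injective f)
    (E : Matrix (Fin n) (Fin m) ℝ)
    (hE : E = Matrix.of fun i j => if i = f j then (1 : ℝ) else 0)
    (b x r : Fin n → ℝ) (hr : r = b - A *ᵥ x)
    (y : Fin m → ℝ) (hy : y = (Eᵀ * A * E)⁻¹ *ᵥ (Eᵀ *ᵥ r))
    (xnew : Fin n → ℝ) (hxnew : xnew = x + E *ᵥ y)
    (d dnew : Fin n → ℝ) (hd : d = A⁻¹ *ᵥ b - x) (hdnew : dnew = A⁻¹ *ᵥ b - xnew) :
    d ⬝ᵥ A *ᵥ d - dnew ⬝ᵥ A *ᵥ dnew ≥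
      (∑ j : Fin m, (r (f j)) ^ 2) / (∑ j : Fin m, A (f j) (f j)) :=
  stmt7_general A hA f hf E hE b x r hr y hy xnew hxnew d dnew hd hdnew
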